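/- (Two Very Fast Runners) Let n ≥ 4 and let v₁ < v₂ < ⋯ < vₙ be positive integers such that ML(v₁, …, v_{n−2}) ≥ L for some real number L. If L − 3v_{n−2}/(n·v_{n−1}) ≥ 1/n, then ML(v₁, …, vₙ) ≥ 1/n. -/

import Mathlib

/-- `dnn x` is the distance from `x` to the nearest integer:
`dnn x = min_{m : ℤ} |x - m|`. -/
noncomputable def dnn (x : ℝ) : ℝ := ⨅ m : ℤ, |x - m|

/-- The maximum loneliness of speeds `v 0, …, v (n-1)`:
`ML v = sup_{t : ℝ} min_{i} dnn (t * v i)`. -/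
noncomputable def ML {n : ℕ} (v : Fin n → ℝ) : ℝ := ⨆ t : ℝ, ⨅ i, dnn (t * v i)

/-!
Write `u = v (n-2) ≤ w = v (n-1)` and `d = 1/n ≤ 1/4`. From any time `t₀`, moving by at most
`d/u` puts the runner of speed `u` inside a window of length `(1 - 2d)/u` during which it stays
at distance `≥ d` from the origin. Since `1 - 2d ≥ 2d ≥ 2d · u/w`, that window contains an
interval of length `2d/w` within `d/w` of the current time, and during such an interval the
runner of speed `w` crosses a point at distance `≥ d`. The resulting time `t` has
`|t - t₀| ≤ 3d/u`, so each of the slower runners, of speed at most `v (n-3)`, loses at most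
`3 v (n-3) / (n v (n-2))` of loneliness compared with `t₀`; the hypothesis on `L` makes up for it.
-/

open Set

lemma dnn_le_abs_sub (x : ℝ) (m : ℤ) : dnn x ≤ |x - m| :=
  ciInf_le ⟨0, by rintro _ ⟨k, rfl⟩; exact abs_nonneg _⟩ m

lemma dnn_eq_abs_sub_round (x : ℝ) : dnn x = |x - round x| :=
  (dnn_le_abs_sub x _).antisymm (le_ciInf (round_le x))

lemma dnn_le_half (x : ℝ) : dnn x ≤ 1 / 2 :=
  dnn_eq_abs_sub_round x ▸ abs_sub_round x

lemma dnn_le_dnn_add_abs_sub (x y : ℝ) : dnn x ≤ dnn y + |x - y| :=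
  calc dnn x ≤ |x - round y| := dnn_le_abs_sub x _
    _ ≤ |x - y| + |y - round y| := abs_sub_le x y _
    _ = dnn y + |x - y| := by rw [dnn_eq_abs_sub_round, add_comm]

lemma le_dnn_of_mem_Icc {x d : ℝ} {m : ℤ} (hx : x ∈ Icc (m + d) (m + 1 - d)) : d ≤ dnn x := by
  refine le_ciInf fun k => ?_
  rcases le_or_gt k m with hk | hk
  · have : (k : ℝ) ≤ m := by exact_mod_cast hk
    exact (le_abs_self _).trans' (by linarith [hx.1])
  · have : (m : ℝ) + 1 ≤ k := by exact_mod_cast hk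
    exact (neg_le_abs _).trans' (by linarith [hx.2])

lemma exists_mem_Icc_of_le_dnn {x d : ℝ} (h : d ≤ dnn x) :
    ∃ m : ℤ, x ∈ Icc (m + d) (m + 1 - d) := by
  refine ⟨⌊x⌋, ?_, ?_⟩
  · have := h.trans (dnn_le_abs_sub x ⌊x⌋)
    rw [abs_of_nonneg (sub_nonneg.2 (Int.floor_le x))] at this
    linarith
  · have := h.trans (dnn_le_abs_sub x (⌊x⌋ + 1))
    rw [abs_of_nonpos (by push_cast; linarith [Int.lt_floor_add_one x])] at this
    push_cast at this
    linarith

lemma exists_abs_sub_le_mem_Icc {a lo hi r : ℝ} (ha : a ∈ Icc lo hi) (hr : 0 ≤ r)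
    (h : lo + r ≤ hi - r) : ∃ c ∈ Icc (lo + r) (hi - r), |c - a| ≤ r := by
  refine ⟨max (lo + r) (min a (hi - r)), ⟨le_max_left _ _, max_le h (min_le_right _ _)⟩, ?_⟩
  have lower : a - r ≤ max (lo + r) (min a (hi - r)) :=
    le_max_of_le_right (le_min (by linarith) (by linarith [ha.2]))
  have upper : max (lo + r) (min a (hi - r)) ≤ a + r :=
    max_le (by linarith [ha.1]) ((min_le_left _ _).trans (by linarith))
  exact abs_sub_le_iff.2 ⟨by linarith, by linarith⟩

lemma abs_div_sub_le {x s r k : ℝ} (hk : 0 < k) (h : |x - k * s| ≤ r) : |x / k - s| ≤ r / k := by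
  rw [div_sub' hk.ne', abs_div, abs_of_pos hk]
  gcongr

lemma exists_abs_sub_le_le_dnn {d : ℝ} (hd0 : 0 ≤ d) (hd : d ≤ 1 / 2) (x : ℝ) :
    ∃ y, |y - x| ≤ d ∧ d ≤ dnn y := by
  obtain ⟨y, hy, hyx⟩ := exists_abs_sub_le_mem_Icc (lo := ⌊x⌋) (hi := ⌊x⌋ + 1)
    ⟨Int.floor_le x, (Int.lt_floor_add_one x).le⟩ hd0 (by linarith)
  exact ⟨y, hyx, le_dnn_of_mem_Icc hy⟩

lemma exists_abs_sub_le_le_dnn_mul {d k : ℝ} (hd0 : 0 ≤ d) (hd : d ≤ 1 / 2) (hk : 0 < k)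
    (s : ℝ) : ∃ x, |x - s| ≤ d / k ∧ d ≤ dnn (k * x) := by
  obtain ⟨y, hys, hy⟩ := exists_abs_sub_le_le_dnn hd0 hd (k * s)
  exact ⟨y / k, abs_div_sub_le hk hys, by rwa [mul_div_cancel₀ y hk.ne']⟩

lemma exists_abs_sub_le_le_dnn_and_le_dnn_mul {d k : ℝ} (hd0 : 0 ≤ d) (hd : d ≤ 1 / 4)
    (hk : 1 ≤ k) (x₀ : ℝ) : ∃ x, |x - x₀| ≤ 3 * d ∧ d ≤ dnn x ∧ d ≤ dnn (k * x) := by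
  have hk0 : 0 < k := by linarith
  have hdk : d / k ≤ d := div_le_self hd0 hk
  obtain ⟨y, hyx₀, hy⟩ := exists_abs_sub_le_le_dnn hd0 (by linarith) x₀
  obtain ⟨m, hym⟩ := exists_mem_Icc_of_le_dnn hy
  obtain ⟨c, hc, hcy⟩ := exists_abs_sub_le_mem_Icc hym (div_nonneg hd0 hk0.le) (by linarith)
  obtain ⟨x, hxc, hx⟩ := exists_abs_sub_le_le_dnn_mul hd0 (by linarith) hk0 c
  have hxm : x ∈ Icc (m + d) (m + 1 - d) := by
    rw [abs_le] at hxc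
    exact ⟨by linarith [hc.1], by linarith [hc.2]⟩
  refine ⟨x, ?_, le_dnn_of_mem_Icc hxm, hx⟩
  linarith [abs_sub_le x c x₀, abs_sub_le c y x₀]

lemma exists_abs_sub_le_le_dnn_mul_and_le_dnn_mul {d u w : ℝ} (hd0 : 0 ≤ d) (hd : d ≤ 1 / 4)
    (hu : 0 < u) (huw : u ≤ w) (t₀ : ℝ) :
    ∃ t, |t - t₀| ≤ 3 * d / u ∧ d ≤ dnn (t * u) ∧ d ≤ dnn (t * w) := by
  obtain ⟨x, hx, hxu, hxw⟩ :=
    exists_abs_sub_le_le_dnn_and_le_dnn_mul hd0 hd ((one_le_div hu).2 huw) (u * t₀)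
  refine ⟨x / u, abs_div_sub_le hu hx, by rwa [div_mul_cancel₀ x hu.ne'], ?_⟩
  convert hxw using 2
  field_simp

lemma dnn_mul_sub_le {t t₀ v V r : ℝ} (hv : 0 ≤ v) (hvV : v ≤ V) (ht : |t - t₀| ≤ r) :
    dnn (t₀ * v) - r * V ≤ dnn (t * v) := by
  have : |t₀ * v - t * v| ≤ r * V := by
    rw [← sub_mul, abs_mul, abs_sub_comm, abs_of_nonneg hv]
    exact mul_le_mul ht hvV hv ((abs_nonneg _).trans ht)
  linarith [dnn_le_dnn_add_abs_sub (t₀ * v) (t * v)]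

lemma iInf_dnn_le_ML {m : ℕ} (v : Fin m → ℝ) (t : ℝ) : ⨅ i, dnn (t * v i) ≤ ML v := by
  refine le_ciSup (f := fun t => ⨅ i, dnn (t * v i)) ⟨1 / 2, ?_⟩ t
  rintro _ ⟨s, rfl⟩
  dsimp only
  rcases isEmpty_or_nonempty (Fin m) with hm | ⟨⟨i⟩⟩
  · rw [Real.iInf_of_isEmpty]
    norm_num
  · exact (Finite.ciInf_le _ i).trans (dnn_le_half _)

theorem stmt_4 (n : ℕ) (hn : 4 ≤ n) (v : Fin n → ℕ)
    (hpos : ∀ i, 0 < v i) (hmono : StrictMono v) (L : ℝ)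
    (hL : ML (fun i : Fin (n - 2) => (v (Fin.castLE (by omega) i) : ℝ)) ≥ L)
    (hcond : L - 3 * (v ⟨n - 3, by omega⟩ : ℝ) / ((n : ℝ) * (v ⟨n - 2, by omega⟩ : ℝ))
      ≥ 1 / (n : ℝ)) :
    ML (fun i => (v i : ℝ)) ≥ 1 / (n : ℝ) := by
  have hn2 : n - 2 < n := by omega
  have hn1 : n - 1 < n := by omega
  have hd : 1 / (n : ℝ) ≤ 1 / 4 := one_div_le_one_div_of_le (by norm_num) (by exact_mod_cast hn)
  have hu : (0 : ℝ) < v ⟨n - 2, hn2⟩ := by exact_mod_cast hpos _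
  have huw : (v ⟨n - 2, hn2⟩ : ℝ) ≤ v ⟨n - 1, hn1⟩ := by
    exact_mod_cast (hmono (Fin.mk_lt_mk.2 (by omega))).le
  have : Nonempty (Fin n) := ⟨⟨0, by omega⟩⟩
  refine le_of_forall_pos_le_add fun ε hε => ?_
  obtain ⟨t₀, ht₀⟩ := exists_lt_of_lt_ciSup (hL.trans_lt' (sub_lt_self L hε))
  obtain ⟨t, ht, htu, htw⟩ :=
    exists_abs_sub_le_le_dnn_mul_and_le_dnn_mul (by positivity) hd hu huw t₀
  suffices 1 / (n : ℝ) - ε ≤ ⨅ i, dnn (t * v i) by linarith [iInf_dnn_le_ML (fun i => (v i : ℝ)) t]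
  refine le_ciInf fun i => ?_
  rcases lt_or_ge i.val (n - 2) with hi | hi
  · have hslow : L - ε < dnn (t₀ * v i) :=
      ht₀.trans_le <| Finite.ciInf_le
        (fun j : Fin (n - 2) => dnn (t₀ * v (Fin.castLE (by omega) j))) ⟨i, hi⟩
    have hi3 : i ≤ ⟨n - 3, by omega⟩ := Fin.le_def.2 (by dsimp only; omega)
    have hlag := dnn_mul_sub_le (Nat.cast_nonneg _) (Nat.cast_le.2 (hmono.monotone hi3)) ht
    have : 3 * (1 / (n : ℝ)) / v ⟨n - 2, hn2⟩ * v ⟨n - 3, by omega⟩ =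
        3 * v ⟨n - 3, by omega⟩ / (n * v ⟨n - 2, hn2⟩) := by ring
    linarith
  · obtain rfl | rfl : i = ⟨n - 2, hn2⟩ ∨ i = ⟨n - 1, hn1⟩ := by
      simp only [Fin.ext_iff]; omega
    · linarith
    · linarith
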